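/- arXiv:2205.10908 — 2 statements merged into one kernel-verified Lean document; each statement's English description precedes it below -/
import Mathlib

section
/- For each natural number r, the function G_r : ℂ → ℝ defined by G_r(z) = ∫₀¹ ln |f_{r,z}(t)| dt, with f_{r,z}(t) = Σ_{j=0}^{r+1} z^j/j! + t^{r+1} z^{r+2}/(r+1)!, is continuous on all of ℂ. -/
open MeasureTheory Finset

noncomputable def fT (r : ℕ) (z : ℂ) (t : ℝ) : ℂ :=
  (∑ j ∈ Finset.range (r + 2), z ^ j / (j.factorial : ℂ)) +
    (t : ℂ) ^ (r + 1) * z ^ (r + 2) / ((r + 1).factorial : ℂ)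

noncomputable def Fms (r : ℕ) (z : ℂ) : ℝ :=
  ∫ t in (0:ℝ)..1, ‖fT r z t‖ ^ 2

noncomputable def Gas (r : ℕ) (z : ℂ) : ℝ :=
  ∫ t in (0:ℝ)..1, Real.log ‖fT r z t‖

/-!
Write `fT r z t = A + t ^ p * B` with `p = r + 1`, `A = ∑_{j ≤ r+1} z ^ j / j!` and
`B = z ^ (r + 2) / (r + 1)!`; the pair `(A, B)` never vanishes and depends continuously on `z`.
For `(A, B) ≠ 0` and `t ∈ [0, 1]` one has `‖A + t ^ p * B‖ ≥ ‖(A, B)‖ / 2 * |t - a| ^ p` for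
some `a ∈ [0, 1]`. Such a lower bound makes the truncations `∫ log (max ε ‖A + t ^ p * B‖)`,
which are continuous in `(A, B)`, converge to `∫ log ‖A + t ^ p * B‖` uniformly near any
`(A, B) ≠ 0`, because `log (ε / y) ≤ 2p (ε / y) ^ (1 / 2p)` turns the truncation error into
`O(ε ^ (1 / 2p)) * |t - a| ^ (-1/2)`, whose integral over `[0, 1]` is bounded uniformly in `a`.
-/

section

open Set Real intervalIntegral

-- For `x < 0`, Mathlib sets `x ^ y = |x| ^ y * cos (y * π)`, which vanishes at `y = ±1/2`.
lemma rpow_eq_zero_of_neg_of_cos_eq_zero {x y : ℝ} (hx : x < 0) (hy : cos (y * π) = 0) :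
    x ^ y = 0 := by
  rw [rpow_def_of_neg hx, hy, mul_zero]

lemma abs_rpow_neg_half (s : ℝ) : |s| ^ (-2⁻¹ : ℝ) = s ^ (-2⁻¹ : ℝ) + (-s) ^ (-2⁻¹ : ℝ) := by
  have hcos : cos (-2⁻¹ * π) = 0 := by rw [neg_mul, cos_neg, inv_mul_eq_div, cos_pi_div_two]
  rcases lt_trichotomy s 0 with hs | rfl | hs
  · rw [rpow_eq_zero_of_neg_of_cos_eq_zero hs hcos, abs_of_neg hs, zero_add]
  · simp
  · rw [rpow_eq_zero_of_neg_of_cos_eq_zero (neg_neg_of_pos hs) hcos, abs_of_pos hs, add_zero]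

lemma intervalIntegrable_neg_rpow {r : ℝ} (hr : -1 < r) (u v : ℝ) :
    IntervalIntegrable (fun s => (-s) ^ r) volume u v := by
  simpa using
    (IntervalIntegrable.iff_comp_neg).mp (intervalIntegrable_rpow' hr (a := -u) (b := -v))

lemma intervalIntegrable_abs_sub_rpow_neg_half (a u v : ℝ) :
    IntervalIntegrable (fun t => |t - a| ^ (-2⁻¹ : ℝ)) volume u v := by
  have hr : (-1 : ℝ) < -2⁻¹ := by norm_num
  have h : IntervalIntegrable (fun s => |s| ^ (-2⁻¹ : ℝ)) volume (u - a) (v - a) := by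
    simp_rw [abs_rpow_neg_half]
    exact (intervalIntegrable_rpow' hr).add (intervalIntegrable_neg_rpow hr _ _)
  simpa using h.comp_sub_right a

lemma integral_abs_rpow_neg_half : ∫ s in (-1 : ℝ)..1, |s| ^ (-2⁻¹ : ℝ) = 4 := by
  have hr : (-1 : ℝ) < -2⁻¹ := by norm_num
  have hcos : cos ((-2⁻¹ + 1) * π) = 0 := by
    rw [show (-2⁻¹ + 1 : ℝ) * π = π / 2 by ring, cos_pi_div_two]
  have h : ∫ s in (-1 : ℝ)..1, s ^ (-2⁻¹ : ℝ) = 2 := by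
    rw [integral_rpow (Or.inl hr),
      rpow_eq_zero_of_neg_of_cos_eq_zero (x := -1) (by norm_num) hcos]
    norm_num
  simp_rw [abs_rpow_neg_half]
  rw [integral_add (intervalIntegrable_rpow' hr) (intervalIntegrable_neg_rpow hr _ _),
    integral_comp_neg (fun s => s ^ (-2⁻¹ : ℝ)), neg_neg, h]
  norm_num

lemma integral_abs_sub_rpow_neg_half_le {a : ℝ} (ha : a ∈ Icc (0 : ℝ) 1) :
    ∫ t in (0 : ℝ)..1, |t - a| ^ (-2⁻¹ : ℝ) ≤ 4 := calc
  _ ≤ ∫ t in (a - 1)..(a + 1), |t - a| ^ (-2⁻¹ : ℝ) :=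
    integral_mono_interval (by linarith [ha.2]) zero_le_one (by linarith [ha.1])
      (Filter.Eventually.of_forall fun t => by positivity)
      (intervalIntegrable_abs_sub_rpow_neg_half a _ _)
  _ = 4 := by
    rw [integral_comp_sub_right (fun s => |s| ^ (-2⁻¹ : ℝ))]
    simpa using integral_abs_rpow_neg_half

lemma log_max_sub_log_le {p : ℕ} (hp : p ≠ 0) {ε c d y : ℝ} (hε : 0 < ε) (hc : 0 < c)
    (hd : 0 < d) (hy : c * d ^ p ≤ y) :
    log (max ε y) - log y ≤ 2 * p * (ε / c) ^ (2 * p : ℝ)⁻¹ * d ^ (-2⁻¹ : ℝ) := by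
  have hq : 0 < (2 * p : ℝ)⁻¹ := by positivity
  have hy0 : 0 < y := (by positivity : 0 < c * d ^ p).trans_le hy
  rcases le_total ε y with hεy | hyε
  · rw [max_eq_right hεy, sub_self]
    positivity
  have hpow : (ε / (c * d ^ p)) ^ (2 * p : ℝ)⁻¹ = (ε / c) ^ (2 * p : ℝ)⁻¹ * d ^ (-2⁻¹ : ℝ) := by
    rw [← div_div, div_rpow (by positivity) (by positivity), ← rpow_natCast, ← rpow_mul hd.le,
      rpow_neg hd.le, div_eq_mul_inv]
    congr 3
    field_simp
  calc log (max ε y) - log y = log (ε / y) := by rw [max_eq_left hyε, log_div hε.ne' hy0.ne']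
    _ ≤ (ε / y) ^ (2 * p : ℝ)⁻¹ / (2 * p : ℝ)⁻¹ := log_le_rpow_div (by positivity) hq
    _ ≤ (ε / (c * d ^ p)) ^ (2 * p : ℝ)⁻¹ / (2 * p : ℝ)⁻¹ := by gcongr
    _ = _ := by rw [hpow, div_inv_eq_mul]; ring

section LowerBound

variable {g : ℝ → ℝ} {p : ℕ} {c a ε : ℝ}

lemma ae_norm_log_max_sub_log_le (hp : p ≠ 0) (hc : 0 < c)
    (hg : ∀ t ∈ Icc (0 : ℝ) 1, c * |t - a| ^ p ≤ g t) (hε : 0 < ε) :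
    ∀ᵐ t, t ∈ Ioc (0 : ℝ) 1 → ‖log (max ε (g t)) - log (g t)‖ ≤
      2 * p * (ε / c) ^ (2 * p : ℝ)⁻¹ * |t - a| ^ (-2⁻¹ : ℝ) := by
  filter_upwards [Measure.ae_ne volume a] with t hta ht
  have hd : 0 < |t - a| := abs_pos.2 (sub_ne_zero.2 hta)
  have hgt := hg t (Ioc_subset_Icc_self ht)
  have hg0 : 0 < g t := (by positivity : 0 < c * |t - a| ^ p).trans_le hgt
  rw [norm_of_nonneg (sub_nonneg.2 (log_le_log hg0 (le_max_right _ _)))]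
  exact log_max_sub_log_le hp hε hc hd hgt

lemma intervalIntegrable_log_of_le_pow (hgc : Continuous g) (hp : p ≠ 0) (hc : 0 < c)
    (hg : ∀ t ∈ Icc (0 : ℝ) 1, c * |t - a| ^ p ≤ g t) :
    IntervalIntegrable (fun t => log (g t)) volume 0 1 := by
  have hmax : IntervalIntegrable (fun t => log (max 1 (g t))) volume 0 1 :=
    (continuous_const.max hgc).log (fun t => (zero_lt_one.trans_le (le_max_left _ _)).ne')
      |>.intervalIntegrable 0 1
  have hdiff : IntervalIntegrable (fun t => log (max 1 (g t)) - log (g t)) volume 0 1 :=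
    ((intervalIntegrable_abs_sub_rpow_neg_half a 0 1).const_mul _).mono_fun'
      (by have := hgc.measurable; fun_prop)
      ((ae_restrict_iff' measurableSet_uIoc).2 <| by
        simpa only [uIoc_of_le zero_le_one] using ae_norm_log_max_sub_log_le hp hc hg one_pos)
  simpa using hmax.sub hdiff

lemma abs_integral_log_max_sub_le (hgc : Continuous g) (hp : p ≠ 0) (hc : 0 < c)
    (ha : a ∈ Icc (0 : ℝ) 1) (hg : ∀ t ∈ Icc (0 : ℝ) 1, c * |t - a| ^ p ≤ g t) (hε : 0 < ε) :
    |(∫ t in (0 : ℝ)..1, log (max ε (g t))) - ∫ t in (0 : ℝ)..1, log (g t)| ≤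
      8 * p * (ε / c) ^ (2 * p : ℝ)⁻¹ := by
  have hmax : IntervalIntegrable (fun t => log (max ε (g t))) volume 0 1 :=
    (continuous_const.max hgc).log (fun t => (hε.trans_le (le_max_left _ _)).ne')
      |>.intervalIntegrable 0 1
  rw [← integral_sub hmax (intervalIntegrable_log_of_le_pow hgc hp hc hg), ← norm_eq_abs]
  calc _ ≤ ∫ t in (0 : ℝ)..1, 2 * p * (ε / c) ^ (2 * p : ℝ)⁻¹ * |t - a| ^ (-2⁻¹ : ℝ) :=
        norm_integral_le_of_norm_le zero_le_one (ae_norm_log_max_sub_log_le hp hc hg hε)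
          ((intervalIntegrable_abs_sub_rpow_neg_half a 0 1).const_mul _)
    _ ≤ 2 * p * (ε / c) ^ (2 * p : ℝ)⁻¹ * 4 := by
        rw [intervalIntegral.integral_const_mul]
        gcongr
        exact integral_abs_sub_rpow_neg_half_le ha
    _ = 8 * p * (ε / c) ^ (2 * p : ℝ)⁻¹ := by ring

end LowerBound

open Filter Topology in
theorem continuousOn_integral_log_of_le_pow {X : Type*} [TopologicalSpace X] {f : X → ℝ → ℝ}
    (hf : Continuous (Function.uncurry f)) {p : ℕ} (hp : p ≠ 0) {c : ℝ} (hc : 0 < c) {s : Set X}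
    (hs : ∀ x ∈ s, ∃ a ∈ Icc (0 : ℝ) 1, ∀ t ∈ Icc (0 : ℝ) 1, c * |t - a| ^ p ≤ f x t) :
    ContinuousOn (fun x => ∫ t in (0 : ℝ)..1, log (f x t)) s := by
  have hF : ∀ ε > 0, Continuous fun x => ∫ t in (0 : ℝ)..1, log (max ε (f x t)) := fun ε hε =>
    continuous_parametric_intervalIntegral_of_continuous'
      ((continuous_const.max hf).log fun _ => (hε.trans_le (le_max_left _ _)).ne') 0 1
  have hq : 0 < (2 * p : ℝ)⁻¹ := by positivity
  have hbound : Tendsto (fun ε => 8 * p * (ε / c) ^ (2 * p : ℝ)⁻¹) (𝓝[>] 0) (𝓝 0) := by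
    have hcont : Continuous fun ε : ℝ => 8 * p * (ε / c) ^ (2 * p : ℝ)⁻¹ :=
      continuous_const.mul ((continuous_id.div_const c).rpow_const fun _ => Or.inr hq.le)
    have := (hcont.tendsto 0).mono_left (nhdsWithin_le_nhds (s := Ioi 0))
    rwa [zero_div, zero_rpow hq.ne', mul_zero] at this
  have hFε : ∀ᶠ ε in 𝓝[>] (0 : ℝ), ContinuousOn
      (fun x => ∫ t in (0 : ℝ)..1, log (max ε (f x t))) s :=
    eventually_mem_nhdsWithin.mono fun ε hε => (hF ε hε).continuousOn
  refine TendstoUniformlyOn.continuousOn ?_ hFε.frequently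
  rw [Metric.tendstoUniformlyOn_iff]
  intro δ hδ
  filter_upwards [self_mem_nhdsWithin, hbound.eventually (gt_mem_nhds hδ)] with ε hε hεδ x hx
  obtain ⟨a, ha, hfa⟩ := hs x hx
  rw [dist_comm, dist_eq]
  exact (abs_integral_log_max_sub_le (hf.uncurry_left x) hp hc ha hfa hε).trans_lt hεδ

lemma abs_sub_pow_le_abs_pow_sub {x y : ℝ} (hx : 0 ≤ x) (hy : 0 ≤ y) {n : ℕ} (hn : n ≠ 0) :
    |x - y| ^ n ≤ |x ^ n - y ^ n| := by
  wlog hxy : y ≤ x generalizing x y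
  · rw [abs_sub_comm, abs_sub_comm (x ^ n)]
    exact this hy hx (le_of_not_ge hxy)
  have h := pow_add_pow_le (sub_nonneg.2 hxy) hy hn
  rw [sub_add_cancel] at h
  rw [abs_of_nonneg (sub_nonneg.2 hxy), abs_of_nonneg (sub_nonneg.2 (pow_le_pow_left₀ hy hxy n))]
  linarith

lemma abs_sub_max_min_le {x : ℝ} (hx : x ∈ Icc (0 : ℝ) 1) (u : ℝ) :
    |x - max 0 (min u 1)| ≤ |x - u| := by
  obtain ⟨hx0, hx1⟩ := hx
  rcases le_total u 0 with hu | hu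
  · rw [min_eq_left (hu.trans zero_le_one), max_eq_left hu, sub_zero, abs_of_nonneg hx0,
      abs_of_nonneg (by linarith)]
    linarith
  rcases le_total u 1 with hu' | hu'
  · rw [min_eq_left hu', max_eq_right hu]
  · rw [min_eq_right hu', max_eq_right zero_le_one, abs_of_nonpos (by linarith),
      abs_of_nonpos (by linarith)]
    linarith

lemma exists_norm_mul_abs_sub_pow_le {p : ℕ} (hp : p ≠ 0) (A : ℂ) {B : ℂ} (hB : B ≠ 0) :
    ∃ a ∈ Icc (0 : ℝ) 1, ∀ t ∈ Icc (0 : ℝ) 1, ‖B‖ * |t - a| ^ p ≤ ‖A + (t : ℂ) ^ p * B‖ := by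
  set u := max 0 (min (-A / B).re 1)
  have hu : u ∈ Icc (0 : ℝ) 1 := ⟨le_max_left _ _, max_le zero_le_one (min_le_right _ _)⟩
  refine ⟨u ^ (p : ℝ)⁻¹, ⟨rpow_nonneg hu.1 _, rpow_le_one hu.1 hu.2 (by positivity)⟩,
    fun t ht => ?_⟩
  have hfactor : A + (t : ℂ) ^ p * B = B * ((t ^ p : ℝ) - (-A / B)) := by
    push_cast
    field_simp
    ring
  rw [hfactor, norm_mul]
  gcongr
  calc |t - u ^ (p : ℝ)⁻¹| ^ p ≤ |t ^ p - (u ^ (p : ℝ)⁻¹) ^ p| :=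
        abs_sub_pow_le_abs_pow_sub ht.1 (rpow_nonneg hu.1 _) hp
    _ = |t ^ p - u| := by rw [rpow_inv_natCast_pow hu.1 hp]
    _ ≤ |t ^ p - (-A / B).re| := abs_sub_max_min_le ⟨pow_nonneg ht.1 p, pow_le_one₀ ht.1 ht.2⟩ _
    _ ≤ ‖((t ^ p : ℝ) : ℂ) - (-A / B)‖ := by
        have h := Complex.abs_re_le_norm (((t ^ p : ℝ) : ℂ) - (-A / B))
        rwa [Complex.sub_re, Complex.ofReal_re] at h

lemma exists_half_norm_mul_abs_sub_pow_le {p : ℕ} (hp : p ≠ 0) (P : ℂ × ℂ) :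
    ∃ a ∈ Icc (0 : ℝ) 1, ∀ t ∈ Icc (0 : ℝ) 1,
      ‖P‖ / 2 * |t - a| ^ p ≤ ‖P.1 + (t : ℂ) ^ p * P.2‖ := by
  obtain ⟨A, B⟩ := P
  rw [Prod.norm_def]
  dsimp only
  rcases le_or_gt (2 * ‖B‖) ‖A‖ with hBA | hAB
  · refine ⟨0, ⟨le_rfl, zero_le_one⟩, fun t ht => ?_⟩
    have htp : |t - 0| ^ p ≤ 1 := by
      rw [sub_zero, abs_of_nonneg ht.1]
      exact pow_le_one₀ ht.1 ht.2
    have hB : ‖(t : ℂ) ^ p * B‖ ≤ ‖B‖ := by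
      rw [norm_mul, norm_pow, Complex.norm_real, norm_of_nonneg ht.1]
      exact mul_le_of_le_one_left (norm_nonneg _) (pow_le_one₀ ht.1 ht.2)
    calc max ‖A‖ ‖B‖ / 2 * |t - 0| ^ p ≤ ‖A‖ / 2 := by
          rw [max_eq_left (by linarith [norm_nonneg B])]
          exact mul_le_of_le_one_right (by positivity) htp
      _ ≤ ‖A‖ - ‖(t : ℂ) ^ p * B‖ := by linarith
      _ ≤ _ := norm_sub_le_norm_add _ _
  · have hB : B ≠ 0 := norm_pos_iff.1 (by linarith [norm_nonneg A])
    obtain ⟨a, ha, hle⟩ := exists_norm_mul_abs_sub_pow_le hp A hB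
    refine ⟨a, ha, fun t ht => le_trans ?_ (hle t ht)⟩
    gcongr
    exact div_le_of_le_mul₀ zero_le_two (norm_nonneg _)
      (max_le (by linarith) (by linarith [norm_nonneg B]))

theorem continuousOn_integral_log_norm_add_pow_mul {p : ℕ} (hp : p ≠ 0) :
    ContinuousOn (fun P : ℂ × ℂ => ∫ t in (0 : ℝ)..1, log ‖P.1 + (t : ℂ) ^ p * P.2‖) {0}ᶜ := by
  intro P₀ hP₀
  have hU : IsOpen {P : ℂ × ℂ | ‖P₀‖ / 2 < ‖P‖} := isOpen_lt continuous_const continuous_norm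
  have hP₀U : P₀ ∈ {P : ℂ × ℂ | ‖P₀‖ / 2 < ‖P‖} := by
    show ‖P₀‖ / 2 < ‖P₀‖
    linarith [norm_pos_iff.2 hP₀]
  have hcont := continuousOn_integral_log_of_le_pow
    (f := fun (P : ℂ × ℂ) (t : ℝ) => ‖P.1 + (t : ℂ) ^ p * P.2‖) (by fun_prop) hp
    (by positivity : 0 < ‖P₀‖ / 4) fun P (hP : ‖P₀‖ / 2 < ‖P‖) => by
      obtain ⟨a, ha, hle⟩ := exists_half_norm_mul_abs_sub_pow_le hp P
      exact ⟨a, ha, fun t ht =>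
        (mul_le_mul_of_nonneg_right (by linarith) (by positivity)).trans (hle t ht)⟩
  exact (hcont.continuousAt (hU.mem_nhds hP₀U)).continuousWithinAt

end

theorem stmt4 (r : ℕ) : Continuous (Gas r) := by
  have hGas : Gas r =
      (fun P : ℂ × ℂ => ∫ t in (0 : ℝ)..1, Real.log ‖P.1 + (t : ℂ) ^ (r + 1) * P.2‖) ∘
        fun z => (∑ j ∈ range (r + 2), z ^ j / (j.factorial : ℂ),
          z ^ (r + 2) / ((r + 1).factorial : ℂ)) := by
    funext z
    simp only [Gas, fT, Function.comp, mul_div_assoc]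
  rw [hGas]
  refine (continuousOn_integral_log_norm_add_pow_mul r.succ_ne_zero).comp_continuous (by fun_prop)
    fun z => ?_
  rcases eq_or_ne z 0 with rfl | hz
  · simp [sum_range_succ']
  · simp [hz, Nat.factorial_ne_zero]
end

section
/- For each natural number r, the asymptotic stability region R_AS^r = {z ∈ ℂ : ∫₀¹ ln |f_{r,z}(t)| dt < 0} is bounded, where f_{r,z}(t) = Σ_{j=0}^{r+1} z^j/j! + t^{r+1} z^{r+2}/(r+1)!. -/
open MeasureTheory Finset

/-!
With `c = z ^ (r + 2) / (r + 1)!` we have `fT r z t = S + t ^ (r + 1) * c`. Choosing `b ≥ 0` with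
`b ^ (r + 1) = ‖S‖ / ‖c‖`, the reverse triangle inequality and the factorisation of
`t ^ (r + 1) - b ^ (r + 1)` give `‖fT r z t‖ ≥ ‖c‖ * |t - b| * t ^ r` on `[0, 1]`. Since
`∫₀¹ log |t - b| ≥ -2` for every real `b` and `∫₀¹ log t = -1`, this yields
`Gas r z ≥ log (‖z‖ ^ (r + 2) / (r + 1)!) - (r + 2)`, so `Gas r z < 0` forces
`‖z‖ ^ (r + 2) < (r + 1)! * exp (r + 2)`.
-/

open Real Nat

theorem abs_sub_mul_pow_le_abs_pow_succ_sub_pow_succ {t b : ℝ} (ht : 0 ≤ t) (hb : 0 ≤ b)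
    (n : ℕ) : |t - b| * t ^ n ≤ |t ^ (n + 1) - b ^ (n + 1)| := by
  have hsum : t ^ n ≤ ∑ i ∈ range (n + 1), t ^ i * b ^ (n - i) := by
    simpa using single_le_sum (f := fun i => t ^ i * b ^ (n - i))
      (fun i _ => by positivity) (self_mem_range_succ n)
  have hfactor :
      t ^ (n + 1) - b ^ (n + 1) = (∑ i ∈ range (n + 1), t ^ i * b ^ (n - i)) * (t - b) := by
    simpa using (geom_sum₂_mul t b (n + 1)).symm
  rw [hfactor, abs_mul, abs_of_nonneg ((pow_nonneg ht n).trans hsum), mul_comm]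
  exact mul_le_mul_of_nonneg_right hsum (abs_nonneg _)

theorem exists_mul_abs_sub_mul_pow_le_norm_add_pow_mul (S c : ℂ) (n : ℕ) :
    ∃ b : ℝ, ∀ t : ℝ, 0 ≤ t → ‖c‖ * (|t - b| * t ^ n) ≤ ‖S + (t : ℂ) ^ (n + 1) * c‖ := by
  rcases eq_or_ne c 0 with rfl | hc
  · exact ⟨0, fun t _ => by simp⟩
  set a := ‖S‖ / ‖c‖
  have ha : 0 ≤ a := by positivity
  set b := a ^ ((n + 1 : ℝ)⁻¹)
  have hb : b ^ (n + 1) = a := by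
    simpa using rpow_inv_natCast_pow ha (n := n + 1) n.succ_ne_zero
  refine ⟨b, fun t ht => ?_⟩
  calc ‖c‖ * (|t - b| * t ^ n)
      ≤ ‖c‖ * |t ^ (n + 1) - a| := by
        gcongr
        simpa [hb] using abs_sub_mul_pow_le_abs_pow_succ_sub_pow_succ ht (b := b) (by positivity) n
    _ = |‖(t : ℂ) ^ (n + 1) * c‖ - ‖S‖| := by
        rw [norm_mul, norm_pow, Complex.norm_real, norm_of_nonneg ht, ← abs_norm c, ← abs_mul,
          abs_norm, mul_sub, mul_div_cancel₀ _ (norm_ne_zero_iff.2 hc), mul_comm ‖c‖]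
    _ ≤ ‖S + (t : ℂ) ^ (n + 1) * c‖ := by
        simpa [add_comm] using abs_norm_sub_norm_le ((t : ℂ) ^ (n + 1) * c) (-S)

theorem mul_log_sub_one_le_mul_log {x : ℝ} (hx : 1 ≤ x) : (x - 1) * log (x - 1) ≤ x * log x := by
  have hlog : log (x - 1) ≤ log x := by
    rcases (sub_nonneg.2 hx).eq_or_lt with h | h
    · rw [← h, log_zero]; exact log_nonneg hx
    · exact log_le_log h (by linarith)
  nlinarith [log_nonneg hx]

theorem neg_two_le_integral_log_abs_sub (b : ℝ) : -2 ≤ ∫ t in (0 : ℝ)..1, log |t - b| := by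
  simp only [log_abs]
  -- the integral is `(1 - b) * log |1 - b| + b * log |b| - 1`
  rw [intervalIntegral.integral_comp_sub_right (fun u => log u), integral_log, zero_sub,
    log_neg_eq_log]
  rcases le_or_gt b 0 with hb | hb
  · have := mul_log_sub_one_le_mul_log (x := 1 - b) (by linarith)
    rw [show 1 - b - 1 = -b by ring, log_neg_eq_log] at this
    nlinarith
  rcases le_or_gt b 1 with hb1 | hb1
  · nlinarith [self_sub_one_le_mul_log hb.le, self_sub_one_le_mul_log (sub_nonneg.2 hb1)]
  · have := mul_log_sub_one_le_mul_log hb1.le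
    rw [← neg_sub b 1, log_neg_eq_log]
    nlinarith

theorem intervalIntegrable_log_norm_fT (r : ℕ) (z : ℂ) :
    IntervalIntegrable (fun t => log ‖fT r z t‖) volume 0 1 := by
  apply MeromorphicOn.intervalIntegrable_log_norm
  intro t _
  apply AnalyticAt.meromorphicAt
  have hofReal := Complex.ofRealCLM.analyticAt t
  exact analyticAt_const.add (((hofReal.pow _).mul analyticAt_const).div analyticAt_const
    (Nat.cast_ne_zero.2 (factorial_ne_zero _)))

theorem log_norm_pow_div_factorial_sub_le_Gas (r : ℕ) {z : ℂ} (hz : z ≠ 0) :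
    log (‖z‖ ^ (r + 2) / (r + 1)!) - (r + 2) ≤ Gas r z := by
  set c : ℂ := z ^ (r + 2) / (r + 1)!
  have hc : ‖c‖ = ‖z‖ ^ (r + 2) / (r + 1)! := by simp [c]
  have hc_pos : 0 < ‖c‖ := by rw [hc]; positivity
  obtain ⟨b, hb⟩ :=
    exists_mul_abs_sub_mul_pow_le_norm_add_pow_mul (∑ j ∈ range (r + 2), z ^ j / j !) c r
  have hpointwise : ∀ t, 0 < t → t ≠ b →
      log ‖c‖ + log |t - b| + r * log t ≤ log ‖fT r z t‖ := by
    intro t ht htb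
    have htb' : 0 < |t - b| := abs_pos.2 (sub_ne_zero.2 htb)
    calc log ‖c‖ + log |t - b| + r * log t = log (‖c‖ * (|t - b| * t ^ r)) := by
          rw [log_mul hc_pos.ne' (by positivity), log_mul htb'.ne' (by positivity), Real.log_pow]
          ring
      _ ≤ log ‖fT r z t‖ :=
          log_le_log (by positivity) (by simpa [fT, mul_div_assoc] using hb t ht.le)
  have hlog_abs : IntervalIntegrable (fun t => log |t - b|) volume 0 1 := by
    simpa [log_abs] using
      (intervalIntegral.intervalIntegrable_log' (a := -b) (b := 1 - b)).comp_sub_right b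
  have hlog : IntervalIntegrable log volume 0 1 := intervalIntegral.intervalIntegrable_log'
  have hlower : ∫ t in (0 : ℝ)..1, (log ‖c‖ + log |t - b| + r * log t) =
      log ‖c‖ + (∫ t in (0 : ℝ)..1, log |t - b|) - r := by
    rw [intervalIntegral.integral_add (intervalIntegrable_const.add hlog_abs) (hlog.const_mul _),
      intervalIntegral.integral_add intervalIntegrable_const hlog_abs,
      intervalIntegral.integral_const_mul, integral_log_from_zero, intervalIntegral.integral_const,
      log_one, smul_eq_mul]
    ring
  have hmono : _ ≤ Gas r z := intervalIntegral.integral_mono_ae_restrict zero_le_one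
    ((intervalIntegrable_const.add hlog_abs).add (hlog.const_mul _))
    (intervalIntegrable_log_norm_fT r z) <| by
      filter_upwards [ae_restrict_mem measurableSet_Icc, ae_restrict_of_ae (volume.ae_ne 0),
        ae_restrict_of_ae (volume.ae_ne b)] with t ht ht0 htb
      exact hpointwise t (ht.1.lt_of_ne' ht0) htb
  rw [hlower, hc] at hmono
  linarith [neg_two_le_integral_log_abs_sub b]

theorem stmt12 (r : ℕ) :
    ∃ γ > (0 : ℝ), ∀ z : ℂ, Gas r z < 0 → ‖z‖ < γ := by
  refine ⟨(r + 1)! * exp (r + 2), by positivity, fun z hG => ?_⟩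
  by_contra! hz
  have hz1 : 1 ≤ ‖z‖ := (one_le_mul_of_one_le_of_one_le (mod_cast (r + 1).factorial_pos)
    (one_le_exp (by positivity))).trans hz
  have hK := (log_norm_pow_div_factorial_sub_le_Gas r (norm_pos_iff.1 (by linarith))).trans_lt hG
  rw [sub_neg, log_lt_iff_lt_exp (by positivity), div_lt_iff₀ (by positivity)] at hK
  linarith [le_self_pow₀ hz1 (by omega : r + 2 ≠ 0)]
end
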